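/- Let A be a commutative algebra over a field of characteristic not 2 with idempotents (axes) a, b, equipped with a Frobenius form with (a,a)=(b,b)=1, and suppose the 2-generated Jordan-type-1/2 identities a(ab) = (1/2)(αa + ab) and b(ab) = (1/2)(αb + ab) and (ab)(ab) = (α/4)(a + b + 2ab) hold, where α = (a,b). Then the element d = (2ab − αa − b)/(α−1) (assuming α ≠ 1) satisfies ad = 0 and d² = d. -/

import Mathlib

section TwinAxis

variable {F : Type*} [Field F] {A : Type*} [NonUnitalNonAssocCommRing A] [Module F A]
  [SMulCommClass F A A]

theorem IsIdempotentElem.inv_smul_of_mul_self_eq_smul [IsScalarTower F A A] {c : F}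
    (hc : c ≠ 0) {x : A} (hx : x * x = c • x) : IsIdempotentElem (c⁻¹ • x) := by
  rw [IsIdempotentElem, smul_mul_assoc, mul_smul_comm, hx, smul_smul, smul_smul,
    inv_mul_cancel_right₀ hc]

/-- Up to the factor `(α - 1)⁻¹`, the twin axis of `a` with respect to `b`. -/
def twinAxisNumerator (α : F) (a b : A) : A := (2 : F) • (a * b) - α • a - b

variable (hchar : (2 : F) ≠ 0) {a b : A} (ha : a * a = a) {α : F}
  (h1 : a * (a * b) = (2 : F)⁻¹ • (α • a + a * b))
include hchar ha h1

theorem mul_twinAxisNumerator_eq_zero : a * twinAxisNumerator α a b = 0 := by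
  rw [twinAxisNumerator, mul_sub, mul_sub, mul_smul_comm, mul_smul_comm, h1, ha]
  match_scalars <;> field_simp <;> ring

theorem twinAxisNumerator_mul_self [IsScalarTower F A A] (hb : b * b = b)
    (h2 : b * (a * b) = (2 : F)⁻¹ • (α • b + a * b))
    (h3 : (a * b) * (a * b) = (α / 4) • (a + b + (2 : F) • (a * b))) :
    twinAxisNumerator α a b * twinAxisNumerator α a b = (α - 1) • twinAxisNumerator α a b := by
  have expand : twinAxisNumerator α a b * twinAxisNumerator α a b
      = (4 : F) • ((a * b) * (a * b)) - ((4 : F) * α) • (a * (a * b))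
        - (4 : F) • (b * (a * b)) + (α * α) • (a * a) + ((2 : F) * α) • (a * b) + b * b := by
    simp only [twinAxisNumerator, sub_mul, mul_sub, smul_mul_assoc, mul_smul_comm,
      mul_comm (a * b) a, mul_comm (a * b) b, mul_comm b a]
    module
  have h4 : (4 : F) ≠ 0 := by simpa [show (4 : F) = 2 * 2 by norm_num] using hchar
  rw [expand, h1, h2, h3, ha, hb, twinAxisNumerator]
  match_scalars <;> field_simp <;> ring

end TwinAxis

/-- In a 2-generated Jordan-type-1/2 situation with `α ≠ 1`, the element
`d = (2ab − αa − b)/(α−1)` satisfies `ad = 0` and `d² = d`. -/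
theorem twin_axis_idempotent
    {F : Type*} [Field F] (hchar : (2 : F) ≠ 0)
    {A : Type*} [NonUnitalNonAssocCommRing A] [Module F A]
    [SMulCommClass F A A] [IsScalarTower F A A]
    (a b : A) (ha : a * a = a) (hb : b * b = b) (α : F) (hα : α ≠ 1)
    (h1 : a * (a * b) = (2 : F)⁻¹ • (α • a + a * b))
    (h2 : b * (a * b) = (2 : F)⁻¹ • (α • b + a * b))
    (h3 : (a * b) * (a * b) = (α / 4) • (a + b + (2 : F) • (a * b))) :
    let d : A := (α - 1)⁻¹ • ((2 : F) • (a * b) - α • a - b)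
    a * d = 0 ∧ d * d = d := by
  change a * ((α - 1)⁻¹ • twinAxisNumerator α a b) = 0 ∧
    IsIdempotentElem ((α - 1)⁻¹ • twinAxisNumerator α a b)
  exact ⟨by rw [mul_smul_comm, mul_twinAxisNumerator_eq_zero hchar ha h1, smul_zero],
    .inv_smul_of_mul_self_eq_smul (sub_ne_zero.mpr hα)
      (twinAxisNumerator_mul_self hchar ha h1 hb h2 h3)⟩
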